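/- arXiv:2107.11869 — 2 statements merged into one kernel-verified Lean document; each statement's English description precedes it below -/
import Mathlib

section
/- Let τ_J = exp(C J^{ς/d}) for constants C, ς, d > 0 and suppose a sequence J_n ∈ T = {2^{ld} : l ∈ ℕ} satisfies τ_{J_n} J_n √(log J_n) ≤ R √n < τ_{J_n⁺} J_n⁺ √(log J_n⁺) where J_n⁺ = 2^d J_n (J_n is the largest dyadic J satisfying the inequality). Then there exist constants c, c' > 0 such that c (log n)^{d/ς} ≤ J_n ≤ c' (log n)^{d/ς} for all sufficiently large n. -/
/-!
Write `a = ς / d` and `y = R √n`, so that `log y = log R + (log n) / 2` lies between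
`(log n) / 4` and `log n` for large `n`. Since `1 ≤ J √(log J) ≤ exp (2 J^a / a)` for
`J ≥ 2`, the factor `J √(log J)` changes the exponent of `τ_J = exp (C J^a)` by at most a
constant factor. Hence maximality gives `C J_n^a ≤ log y ≤ log n` and
`log n / 4 ≤ log y < (C + 2/a) (2^d J_n)^a`, and solving these for `J_n` gives the two
bounds with exponent `1/a = d/ς`.
-/

open Real Filter

lemma mul_sqrt_log_le_exp_rpow {a K : ℝ} (ha : 0 < a) (hK : 1 ≤ K) :
    K * √(log K) ≤ exp (2 / a * K ^ a) := by
  have hK0 : 0 < K := one_pos.trans_le hK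
  have hsqrt : √(log K) ≤ K :=
    sqrt_le_iff.mpr ⟨hK0.le, by nlinarith [log_le_sub_one_of_pos hK0]⟩
  calc K * √(log K) ≤ exp (log K) ^ 2 := by rw [exp_log hK0, sq]; gcongr
    _ = exp (2 * log K) := by rw [← exp_nat_mul]; norm_num
    _ ≤ exp (2 / a * K ^ a) := by
      rw [exp_le_exp, mul_comm_div]
      exact (mul_le_mul_iff_right₀ two_pos).mpr (log_le_rpow_div hK0.le ha)

lemma one_le_mul_sqrt_log {K : ℝ} (hK : 2 ≤ K) : 1 ≤ K * √(log K) := by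
  have hlog : 1 / 4 ≤ log K := by
    linarith [log_le_log two_pos hK, log_two_gt_d9]
  have hsqrt : 1 / 2 ≤ √(log K) :=
    le_sqrt_of_sq_le (by linarith)
  nlinarith

lemma log_lt_mul_rpow_of_lt_exp_mul_sqrt_log {C a K y : ℝ} (ha : 0 < a) (hK : 1 ≤ K)
    (hy : 0 < y) (h : y < exp (C * K ^ a) * K * √(log K)) :
    log y < (C + 2 / a) * K ^ a := by
  rw [log_lt_iff_lt_exp hy]
  calc y < exp (C * K ^ a) * (K * √(log K)) := by rwa [← mul_assoc]
    _ ≤ exp (C * K ^ a) * exp (2 / a * K ^ a) := by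
      gcongr; exact mul_sqrt_log_le_exp_rpow ha hK
    _ = exp ((C + 2 / a) * K ^ a) := by rw [← exp_add]; ring_nf

lemma mul_rpow_le_log_of_exp_mul_sqrt_log_le {C a J y : ℝ} (hJ : 2 ≤ J)
    (h : exp (C * J ^ a) * J * √(log J) ≤ y) : C * J ^ a ≤ log y := by
  have hexp : exp (C * J ^ a) ≤ y := by
    calc exp (C * J ^ a) ≤ exp (C * J ^ a) * (J * √(log J)) :=
          le_mul_of_one_le_right (exp_pos _).le (one_le_mul_sqrt_log hJ)
      _ ≤ y := by rwa [← mul_assoc]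
  exact (le_log_iff_exp_le ((exp_pos _).trans_le hexp)).mpr hexp

lemma mul_rpow_le_iff_le_mul_rpow_inv {a c K x : ℝ} (ha : 0 < a) (hc : 0 < c)
    (hK : 0 ≤ K) (hx : 0 ≤ x) : c * K ^ a ≤ x ↔ K ≤ (1 / c) ^ a⁻¹ * x ^ a⁻¹ := by
  rw [← mul_rpow (by positivity) hx, le_rpow_inv_iff_of_pos hK (by positivity) ha,
    one_div_mul_eq_div, le_div_iff₀' hc]

lemma mul_rpow_inv_le_of_lt_exp_mul_sqrt_log {C a K x y : ℝ} (hC : 0 ≤ C) (ha : 0 < a)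
    (hK : 1 ≤ K) (hx : 0 ≤ x) (hy : 0 < y) (hxy : x / 4 ≤ log y)
    (h : y < exp (C * K ^ a) * K * √(log K)) :
    (1 / (4 * (C + 2 / a))) ^ a⁻¹ * x ^ a⁻¹ ≤ K := by
  have hlt : x < 4 * (C + 2 / a) * K ^ a := by
    linarith [log_lt_mul_rpow_of_lt_exp_mul_sqrt_log ha hK hy h]
  exact (not_le.mp fun hle => hlt.not_ge ((mul_rpow_le_iff_le_mul_rpow_inv ha (by positivity)
    (by positivity) hx).mpr hle)).le

lemma le_mul_rpow_inv_of_exp_mul_sqrt_log_le {C a J x y : ℝ} (hC : 0 < C) (ha : 0 < a)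
    (hJ : 2 ≤ J) (hyx : log y ≤ x) (h : exp (C * J ^ a) * J * √(log J) ≤ y) :
    J ≤ (1 / C) ^ a⁻¹ * x ^ a⁻¹ := by
  have hle := (mul_rpow_le_log_of_exp_mul_sqrt_log_le hJ h).trans hyx
  have hJ0 : 0 ≤ J := by linarith
  have hx : 0 ≤ x := (by positivity : 0 ≤ C * J ^ a).trans hle
  exact (mul_rpow_le_iff_le_mul_rpow_inv ha hC hJ0 hx).mp hle

lemma tendsto_log_natCast_atTop : Tendsto (fun n : ℕ => log n) atTop atTop :=
  tendsto_log_atTop.comp tendsto_natCast_atTop_atTop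

lemma eventually_log_div_four_le_log_mul_sqrt {R : ℝ} (hR : 0 < R) :
    ∀ᶠ n : ℕ in atTop, log n / 4 ≤ log (R * √n) ∧ log (R * √n) ≤ log n := by
  filter_upwards [tendsto_log_natCast_atTop.eventually_ge_atTop (2 * log R),
    tendsto_log_natCast_atTop.eventually_ge_atTop (-4 * log R), eventually_gt_atTop 0]
    with n hupper hlower hn
  have hn' : (0 : ℝ) < n := Nat.cast_pos.mpr hn
  rw [log_mul hR.ne' (sqrt_pos.mpr hn').ne', log_sqrt hn'.le]
  constructor <;> linarith

lemma two_pow_eq_one_or_two_le (m : ℕ) : (2 : ℝ) ^ m = 1 ∨ 2 ≤ (2 : ℝ) ^ m := by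
  rcases Nat.eq_zero_or_pos m with rfl | hm
  · exact Or.inl (pow_zero 2)
  · exact Or.inr (le_self_pow₀ one_le_two hm.ne')

/-- In the severely ill-posed regime `τ_J = exp(C J^{ς/d})`, if `J n = 2^{l(n)·d}` is
the largest dyadic dimension satisfying `τ_J · J · √(log J) ≤ R √n` (so the next dyadic
dimension `2^d · J n` violates the inequality), then `J n ≍ (log n)^{d/ς}`. -/
theorem stmt_6 (C ς : ℝ) (d : ℕ) (R : ℝ)
    (hC : 0 < C) (hς : 0 < ς) (hd : 0 < d) (hR : 0 < R)
    (τ : ℝ → ℝ) (hτ : ∀ J : ℝ, τ J = Real.exp (C * J ^ (ς / (d : ℝ))))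
    (l : ℕ → ℕ) (J : ℕ → ℝ) (hJ : ∀ n, J n = (2 : ℝ) ^ (l n * d))
    (hmax : ∀ n : ℕ, 2 ≤ n →
      τ (J n) * J n * Real.sqrt (Real.log (J n)) ≤ R * Real.sqrt n ∧
      R * Real.sqrt n <
        τ (2 ^ d * J n) * (2 ^ d * J n) * Real.sqrt (Real.log (2 ^ d * J n))) :
    ∃ c c' : ℝ, 0 < c ∧ 0 < c' ∧ ∃ N : ℕ, ∀ n ≥ N,
      c * (Real.log n) ^ ((d : ℝ) / ς) ≤ J n ∧
      J n ≤ c' * (Real.log n) ^ ((d : ℝ) / ς) := by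
  set a := ς / d
  have ha : 0 < a := div_pos hς (Nat.cast_pos.mpr hd)
  rw [← inv_div ς]
  refine ⟨((2 : ℝ) ^ d)⁻¹ * (1 / (4 * (C + 2 / a))) ^ a⁻¹, max ((1 / C) ^ a⁻¹) 1,
    by positivity, by positivity, eventually_atTop.mp ?_⟩
  filter_upwards [eventually_log_div_four_le_log_mul_sqrt hR, eventually_ge_atTop 2,
    tendsto_log_natCast_atTop.eventually_ge_atTop 1] with n ⟨hlower, hupper⟩ hn2 hlog1
  obtain ⟨hfit, hnext⟩ := hmax n hn2
  rw [hτ] at hfit hnext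
  have hJ1 : 1 ≤ J n := hJ n ▸ one_le_pow₀ one_le_two
  have hpow1 : 1 ≤ log n ^ a⁻¹ := one_le_rpow hlog1 (inv_pos.mpr ha).le
  constructor
  · have hK : 1 ≤ 2 ^ d * J n := one_le_mul_of_one_le_of_one_le (one_le_pow₀ one_le_two) hJ1
    have hK_ge := mul_rpow_inv_le_of_lt_exp_mul_sqrt_log hC.le ha hK (by positivity)
      (by positivity) hlower hnext
    calc _ = ((2 : ℝ) ^ d)⁻¹ * ((1 / (4 * (C + 2 / a))) ^ a⁻¹ * log n ^ a⁻¹) := by ring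
      _ ≤ ((2 : ℝ) ^ d)⁻¹ * (2 ^ d * J n) := by gcongr
      _ = J n := by field_simp
  · rcases two_pow_eq_one_or_two_le (l n * d) with h1 | h2
    · rw [hJ n, h1]
      exact one_le_mul_of_one_le_of_one_le (le_max_right _ _) hpow1
    · calc J n ≤ (1 / C) ^ a⁻¹ * log n ^ a⁻¹ :=
          le_mul_rpow_inv_of_exp_mul_sqrt_log_le hC ha (hJ n ▸ h2) hupper hfit
        _ ≤ _ := by gcongr; exact le_max_left _ _
end

section
/- Let Ĝ and G be symmetric positive definite n×n matrices. Then ‖Ĝ^{−1/2} G^{1/2} − I‖ ≤ (λ_min(Ĝ) + λ_min(G))^{−1/2} · ‖Ĝ − G‖ · ‖Ĝ^{−1/2}‖, where ‖·‖ is the operator norm and M^{1/2} the positive definite square root. -/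
/-!
Write `S = Ĝ^{1/2}` and `T = G^{1/2}`. Since `Ĝ^{-1/2} G^{1/2} - 1 = S⁻¹ (T - S)`, it suffices to
show `√(λ_min Ĝ + λ_min G) ‖T - S‖ ≤ ‖Ĝ - G‖`. Let `v` be a unit eigenvector of the symmetric
matrix `T - S` whose eigenvalue `μ` satisfies `|μ| = ‖T - S‖`. Testing
`G - Ĝ = T² - S² = S (T - S) + (T - S) T` against `v` gives
`⟪(G - Ĝ) v, v⟫ = μ (⟪S v, v⟫ + ⟪T v, v⟫)`, and `S ≥ √(λ_min Ĝ)`, `T ≥ √(λ_min G)` in the Loewner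
order, while `√(a + b) ≤ √a + √b`.
-/

open Matrix RealInnerProductSpace
open scoped MatrixOrder Matrix.Norms.L2Operator

/-- The `ℓ²→ℓ²` operator norm of a real square matrix. -/
noncomputable def matrixOpNorm {n : ℕ} (M : Matrix (Fin n) (Fin n) ℝ) : ℝ :=
  ‖(Matrix.toEuclideanCLM (𝕜 := ℝ) M : EuclideanSpace ℝ (Fin n) →L[ℝ] EuclideanSpace ℝ (Fin n))‖

/-- The positive semidefinite square root of a positive semidefinite matrix (the definition
`Matrix.PosSemidef.sqrt` of the older Mathlib, removed since). -/
noncomputable def Matrix.PosSemidef.sqrt {n : Type*} [Fintype n] [DecidableEq n]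
    {A : Matrix n n ℝ} (hA : A.PosSemidef) : Matrix n n ℝ :=
  (hA.1.eigenvectorUnitary : Matrix n n ℝ) *
    Matrix.diagonal ((↑) ∘ (Real.sqrt ·) ∘ hA.1.eigenvalues) *
    (star (hA.1.eigenvectorUnitary : Matrix n n ℝ))

theorem matrixOpNorm_eq_norm {n : ℕ} (M : Matrix (Fin n) (Fin n) ℝ) : matrixOpNorm M = ‖M‖ :=
  rfl

theorem Real.sqrt_add_le_add_sqrt {x y : ℝ} (hx : 0 ≤ x) (hy : 0 ≤ y) : √(x + y) ≤ √x + √y := by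
  rw [Real.sqrt_le_left (by positivity)]
  nlinarith [Real.sq_sqrt hx, Real.sq_sqrt hy,
    mul_nonneg (Real.sqrt_nonneg x) (Real.sqrt_nonneg y)]

namespace ContinuousLinearMap

variable {E : Type*} [NormedAddCommGroup E] [InnerProductSpace ℝ E] [FiniteDimensional ℝ E]

theorem exists_hasEigenvalue_abs_eq_norm [Nontrivial E] {T : E →L[ℝ] E} (hT : IsSelfAdjoint T) :
    ∃ μ, Module.End.HasEigenvalue (T : E →ₗ[ℝ] E) μ ∧ |μ| = ‖T‖ := by
  have hne : (spectrum ℝ T).Nonempty := by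
    rw [spectrum_eq]
    exact ⟨_, hT.isSymmetric.hasEigenvalue_iSup_of_finiteDimensional.mem_spectrum⟩
  obtain ⟨μ, hμ, hμT⟩ := spectrum.exists_nnnorm_eq_spectralRadius_of_nonempty hne
  rw [spectralRadius_eq_nnnorm T hT, ENNReal.coe_inj, ← NNReal.coe_inj] at hμT
  rw [spectrum_eq] at hμ
  exact ⟨μ, Module.End.hasEigenvalue_iff_mem_spectrum.mpr hμ, hμT⟩

theorem exists_unit_eigenvector_abs_eq_norm [Nontrivial E] {T : E →L[ℝ] E}
    (hT : IsSelfAdjoint T) : ∃ μ v, ‖v‖ = 1 ∧ T v = μ • v ∧ |μ| = ‖T‖ := by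
  obtain ⟨μ, hμ, hμT⟩ := exists_hasEigenvalue_abs_eq_norm hT
  obtain ⟨v, hv⟩ := hμ.exists_hasEigenvector
  refine ⟨μ, ‖v‖⁻¹ • v, norm_smul_inv_norm hv.2, ?_, hμT⟩
  rw [map_smul, smul_comm]
  exact congrArg _ hv.apply_eq_smul

theorem mul_norm_sub_le_norm_mul_self_sub {S T : E →L[ℝ] E} (hTS : IsSelfAdjoint (T - S))
    {α β : ℝ} (hSα : ∀ v, α * ‖v‖ ^ 2 ≤ ⟪S v, v⟫)
    (hTβ : ∀ v, β * ‖v‖ ^ 2 ≤ ⟪T v, v⟫) :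
    (α + β) * ‖T - S‖ ≤ ‖T * T - S * S‖ := by
  nontriviality E
  obtain ⟨μ, v, hv, hμv, hμ⟩ := exists_unit_eigenvector_abs_eq_norm hTS
  have hform : ⟪(T * T - S * S) v, v⟫ = μ * (⟪S v, v⟫ + ⟪T v, v⟫) := by
    have : T * T - S * S = S * (T - S) + (T - S) * T := by noncomm_ring
    have hΔ : ⟪(T - S) (T v), v⟫ = ⟪T v, (T - S) v⟫ := hTS.isSymmetric _ _
    rw [this, _root_.add_apply, mul_apply_eq_comp, mul_apply_eq_comp, inner_add_left, hΔ, hμv,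
      map_smul, real_inner_smul_left, real_inner_smul_right]
    ring
  calc (α + β) * ‖T - S‖ ≤ |μ| * (⟪S v, v⟫ + ⟪T v, v⟫) := by
        rw [← hμ, mul_comm]
        exact mul_le_mul_of_nonneg_left (by simpa [hv] using add_le_add (hSα v) (hTβ v))
          (abs_nonneg μ)
    _ ≤ |⟪(T * T - S * S) v, v⟫| := by rw [hform, abs_mul]; gcongr; exact le_abs_self _
    _ ≤ ‖T * T - S * S‖ := by
        simpa [hv] using (abs_real_inner_le_norm _ _).trans
          (mul_le_mul_of_nonneg_right ((T * T - S * S).le_opNorm v) (norm_nonneg v))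

end ContinuousLinearMap

namespace Matrix
variable {n : Type*} [Fintype n] [DecidableEq n] {A : Matrix n n ℝ}

theorem PosSemidef.sqrt_eq_cfc (hA : A.PosSemidef) : hA.sqrt = cfc Real.sqrt A := by
  rw [hA.1.cfc_eq]
  rfl

theorem PosSemidef.sqrt_mul_self (hA : A.PosSemidef) : hA.sqrt * hA.sqrt = A := by
  rw [hA.sqrt_eq_cfc, ← cfcₙ_eq_cfc, ← CFC.sqrt_eq_real_sqrt A hA.nonneg,
    CFC.sqrt_mul_sqrt_self A hA.nonneg]

theorem PosSemidef.posSemidef_sqrt (hA : A.PosSemidef) : hA.sqrt.PosSemidef := by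
  rw [hA.sqrt_eq_cfc, ← cfcₙ_eq_cfc, ← CFC.sqrt_eq_real_sqrt A hA.nonneg,
    ← nonneg_iff_posSemidef]
  exact CFC.sqrt_nonneg A

theorem IsHermitian.iInf_eigenvalues_le (hA : A.IsHermitian) {x : ℝ} (hx : x ∈ spectrum ℝ A) :
    ⨅ i, hA.eigenvalues i ≤ x := by
  rw [hA.spectrum_real_eq_range_eigenvalues] at hx
  obtain ⟨i, rfl⟩ := hx
  exact ciInf_le (Finite.bddBelow_range _) i

theorem PosSemidef.algebraMap_le_sqrt (hA : A.PosSemidef) :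
    algebraMap ℝ _ √(⨅ i, hA.1.eigenvalues i) ≤ hA.sqrt := by
  rw [hA.sqrt_eq_cfc, algebraMap_le_iff_le_spectrum, cfc_map_spectrum Real.sqrt A]
  rintro _ ⟨x, hx, rfl⟩
  exact Real.sqrt_le_sqrt (hA.1.iInf_eigenvalues_le hx)

theorem le_inner_toEuclideanCLM_of_algebraMap_le {c : ℝ} (h : algebraMap ℝ _ c ≤ A)
    (v : EuclideanSpace ℝ n) : c * ‖v‖ ^ 2 ≤ ⟪toEuclideanCLM (𝕜 := ℝ) A v, v⟫ := by
  have hnonneg := (Matrix.le_iff.mp h).dotProduct_mulVec_nonneg (WithLp.ofLp v)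
  rw [real_inner_comm, inner_toEuclideanCLM, ← real_inner_self_eq_norm_sq]
  simp only [Algebra.algebraMap_eq_smul_one, sub_mulVec, smul_mulVec, one_mulVec, star_trivial,
    dotProduct_sub, dotProduct_smul, smul_eq_mul, sub_nonneg] at hnonneg
  rwa [EuclideanSpace.inner_eq_star_dotProduct, star_trivial]

theorem PosSemidef.mul_norm_sqrt_sub_sqrt_le {B : Matrix n n ℝ} (hA : A.PosSemidef)
    (hB : B.PosSemidef) :
    (√(⨅ i, hA.1.eigenvalues i) + √(⨅ i, hB.1.eigenvalues i)) * ‖hB.sqrt - hA.sqrt‖ ≤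
      ‖B - A‖ := by
  have hsa :
      IsSelfAdjoint (toEuclideanCLM (𝕜 := ℝ) hB.sqrt - toEuclideanCLM (𝕜 := ℝ) hA.sqrt) := by
    rw [← map_sub]
    exact (hB.posSemidef_sqrt.1.sub hA.posSemidef_sqrt.1).isSelfAdjoint.map _
  have h := ContinuousLinearMap.mul_norm_sub_le_norm_mul_self_sub hsa
    (le_inner_toEuclideanCLM_of_algebraMap_le hA.algebraMap_le_sqrt)
    (le_inner_toEuclideanCLM_of_algebraMap_le hB.algebraMap_le_sqrt)
  rwa [← map_sub, ← map_mul, ← map_mul, ← map_sub, ← cstar_norm_def, ← cstar_norm_def,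
    hA.sqrt_mul_self, hB.sqrt_mul_self] at h

theorem PosDef.isUnit_det_sqrt (hA : A.PosDef) :
    IsUnit hA.posSemidef.sqrt.det := by
  refine isUnit_of_mul_isUnit_left (y := hA.posSemidef.sqrt.det) ?_
  rw [← det_mul, hA.posSemidef.sqrt_mul_self]
  exact hA.det_pos.ne'.isUnit

theorem PosDef.iInf_eigenvalues_pos [Nonempty n] (hA : A.PosDef) :
    0 < ⨅ i, hA.1.eigenvalues i := by
  obtain ⟨i, hi⟩ := exists_eq_ciInf_of_finite (f := hA.1.eigenvalues)
  exact hi ▸ hA.eigenvalues_pos i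

end Matrix

/-- For symmetric positive definite matrices `Ĝ` and `G`,
`‖Ĝ^{−1/2} G^{1/2} − I‖ ≤ (λ_min(Ĝ) + λ_min(G))^{−1/2} · ‖Ĝ − G‖ · ‖Ĝ^{−1/2}‖`
in the operator norm, where `M^{1/2}` denotes the positive semidefinite square root. -/
theorem stmt_9 (n : ℕ) (Ghat G : Matrix (Fin (n + 1)) (Fin (n + 1)) ℝ)
    (hGhat : Ghat.PosDef) (hG : G.PosDef) :
    matrixOpNorm ((hGhat.posSemidef.sqrt)⁻¹ * hG.posSemidef.sqrt - 1) ≤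
      (Real.sqrt ((⨅ i, hGhat.isHermitian.eigenvalues i) +
          (⨅ i, hG.isHermitian.eigenvalues i)))⁻¹ *
        matrixOpNorm (Ghat - G) *
        matrixOpNorm ((hGhat.posSemidef.sqrt)⁻¹) := by
  set a := ⨅ i, hGhat.isHermitian.eigenvalues i
  set b := ⨅ i, hG.isHermitian.eigenvalues i
  set S := hGhat.posSemidef.sqrt
  set T := hG.posSemidef.sqrt
  have ha : 0 < a := hGhat.iInf_eigenvalues_pos
  have hb : 0 < b := hG.iInf_eigenvalues_pos
  have hsqrt : √(a + b) * ‖T - S‖ ≤ ‖Ghat - G‖ := by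
    rw [norm_sub_rev Ghat]
    calc √(a + b) * ‖T - S‖ ≤ (√a + √b) * ‖T - S‖ := by
          gcongr; exact Real.sqrt_add_le_add_sqrt ha.le hb.le
      _ ≤ ‖G - Ghat‖ := hGhat.posSemidef.mul_norm_sqrt_sub_sqrt_le hG.posSemidef
  simp only [matrixOpNorm_eq_norm]
  calc ‖S⁻¹ * T - 1‖ = ‖S⁻¹ * (T - S)‖ := by rw [mul_sub, nonsing_inv_mul _ hGhat.isUnit_det_sqrt]
    _ ≤ ‖S⁻¹‖ * ‖T - S‖ := norm_mul_le _ _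
    _ ≤ ‖S⁻¹‖ * ((√(a + b))⁻¹ * ‖Ghat - G‖) := by
        gcongr
        rwa [le_inv_mul_iff₀ (by positivity)]
    _ = (√(a + b))⁻¹ * ‖Ghat - G‖ * ‖S⁻¹‖ := by ring
end
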